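/- Let k be a field of characteristic zero and R = MvPowerSeries (Fin n) k with maximal ideal m = (X_1, …, X_n). Then a formal power series f has order ≥ b (i.e., f ∈ m^b) if and only if for every sequence of at most b−1 formal partial derivatives D_1, …, D_j (each some ∂/∂X_i, j ≤ b−1), the constant coefficient of D_1 ⋯ D_j f is zero. -/

import Mathlib

/-!
Both sides say that every coefficient of `f` of total degree `< b` vanishes. For the
derivatives this is because `∂_{i₁} ⋯ ∂_{iⱼ} f` has constant coefficient
`c • coeff (e_{i₁} + ⋯ + e_{iⱼ}) f` with `c` a positive integer, invertible in characteristic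
zero. For the ideal, `m ^ b` lies in `order ≥ b` since the order is superadditive; conversely,
in characteristic zero Euler's identity `∑ X_i ∂_i g = f` with `g := coeff d f / degree d` writes
a series of order `≥ b + 1` as a combination of the `X_i` with coefficients `∂_i g` of
order `≥ b`.
-/

open MvPowerSeries

/-- Formal partial derivative with respect to the variable `i` on multivariate
formal power series. -/
noncomputable def psDeriv {k : Type*} [Field k] {n : ℕ} (i : Fin n)
    (f : MvPowerSeries (Fin n) k) : MvPowerSeries (Fin n) k :=
  fun d => (d i + 1 : ℕ) • MvPowerSeries.coeff (d + Finsupp.single i 1) f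

open Finsupp

theorem Multiset.degree_toFinsupp {σ : Type*} [DecidableEq σ] (s : Multiset σ) :
    degree (Multiset.toFinsupp s) = Multiset.card s := by
  rw [degree_apply, ← Multiset.toFinsupp_sum_eq, Finsupp.sum]
  rfl

namespace MvPowerSeries

variable {σ R : Type*}

section CommSemiring

variable [CommSemiring R]

theorem constantCoeff_eq_zero_of_mem_span_X {f : MvPowerSeries σ R}
    (hf : f ∈ Ideal.span (Set.range X)) : constantCoeff f = 0 := by
  have hle : Ideal.span (Set.range X) ≤ RingHom.ker (constantCoeff (σ := σ) (R := R)) :=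
    Ideal.span_le.mpr (by rintro _ ⟨i, rfl⟩; simp)
  exact hle hf

theorem le_order_of_mem_span_X_pow {b : ℕ} {f : MvPowerSeries σ R}
    (hf : f ∈ Ideal.span (Set.range X) ^ b) : (b : ℕ∞) ≤ f.order := by
  induction b generalizing f with
  | zero => simp
  | succ b ih =>
    rw [pow_succ'] at hf
    refine Submodule.mul_induction_on hf (fun x hx y hy => ?_) (fun x y hx hy => ?_)
    · calc ((b + 1 : ℕ) : ℕ∞) = 1 + b := by push_cast; ring
        _ ≤ x.order + y.order := add_le_add
            (one_le_order_iff_constCoeff_eq_zero.mpr (constantCoeff_eq_zero_of_mem_span_X hx))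
            (ih hy)
        _ ≤ (x * y).order := le_order_mul
    · exact (le_min hx hy).trans min_order_le_add

theorem le_order_pderiv {b : ℕ} {f : MvPowerSeries σ R} (i : σ)
    (hf : ((b + 1 : ℕ) : ℕ∞) ≤ f.order) : (b : ℕ∞) ≤ (pderiv R i f).order := by
  refine nat_le_order fun d hd => ?_
  rw [coeff_pderiv, coeff_of_lt_order, zero_mul]
  refine lt_of_lt_of_le ?_ hf
  rw [map_add, degree_single]
  exact_mod_cast Nat.succ_lt_succ hd

theorem coeff_X_mul_pderiv (i : σ) (f : MvPowerSeries σ R) (d : σ →₀ ℕ) :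
    coeff d (X i * pderiv R i f) = d i * coeff d f := by
  by_cases hd : d i = 0
  · rw [hd, Nat.cast_zero, zero_mul, X_def, coeff_monomial_mul, if_neg]
    rwa [single_le_iff, Nat.one_le_iff_ne_zero, not_not]
  · have hle : single i 1 ≤ d := single_le_iff.mpr (Nat.one_le_iff_ne_zero.mpr hd)
    obtain ⟨e, rfl⟩ : ∃ e, d = e + single i 1 :=
      ⟨d - single i 1, (tsub_add_cancel_of_le hle).symm⟩
    rw [X_mul, X_def, coeff_add_mul_monomial, mul_one, coeff_pderiv, mul_comm]
    simp

theorem coeff_sum_X_mul_pderiv [Fintype σ] (f : MvPowerSeries σ R) (d : σ →₀ ℕ) :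
    coeff d (∑ i, X i * pderiv R i f) = degree d * coeff d f := by
  simp only [map_sum, coeff_X_mul_pderiv, ← Finset.sum_mul, degree_eq_sum, Nat.cast_sum]

theorem coeff_foldl_pderiv [DecidableEq σ] (l : List σ) (f : MvPowerSeries σ R)
    (d : σ →₀ ℕ) : ∃ c : ℕ, c ≠ 0 ∧
      coeff d (l.foldl (fun g i => pderiv R i g) f) = c * coeff (d + Multiset.toFinsupp l) f := by
  induction l generalizing f d with
  | nil => exact ⟨1, one_ne_zero, by simp⟩
  | cons i t ih =>
    obtain ⟨c, hc, hcoeff⟩ := ih (pderiv R i f) d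
    refine ⟨c * ((d + Multiset.toFinsupp (t : Multiset σ)) i + 1), by positivity, ?_⟩
    rw [List.foldl_cons, hcoeff, coeff_pderiv, ← Multiset.cons_coe, ← Multiset.singleton_add,
      Multiset.toFinsupp_add, Multiset.toFinsupp_singleton, add_left_comm, add_comm (single i 1)]
    push_cast
    ring

end CommSemiring

section Field

variable {k : Type*} [Field k]

/-- Inverse, on series without constant term, of the Euler operator `∑ i, X i * ∂ᵢ`, which
multiplies the coefficient of `X^d` by `degree d`. The constant coefficient goes to
`0⁻¹ * _ = 0`. -/
noncomputable def eulerInv (f : MvPowerSeries σ k) : MvPowerSeries σ k :=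
  fun d => ((degree d : ℕ) : k)⁻¹ * coeff d f

theorem coeff_eulerInv (f : MvPowerSeries σ k) (d : σ →₀ ℕ) :
    coeff d (eulerInv f) = ((degree d : ℕ) : k)⁻¹ * coeff d f := rfl

theorem order_le_order_eulerInv (f : MvPowerSeries σ k) : f.order ≤ (eulerInv f).order :=
  le_order fun d hd => by rw [coeff_eulerInv, coeff_of_lt_order hd, mul_zero]

theorem sum_X_mul_pderiv_eulerInv [CharZero k] [Fintype σ] {f : MvPowerSeries σ k}
    (hf : constantCoeff f = 0) : ∑ i, X i * pderiv k i (eulerInv f) = f := by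
  ext d
  rw [coeff_sum_X_mul_pderiv, coeff_eulerInv]
  by_cases hd : d = 0
  · subst hd
    simp [hf]
  · rw [mul_inv_cancel_left₀]
    exact_mod_cast (degree_eq_zero_iff d).not.mpr hd

theorem mem_span_X_pow_of_le_order [CharZero k] [Fintype σ] {b : ℕ} {f : MvPowerSeries σ k}
    (hf : (b : ℕ∞) ≤ f.order) : f ∈ Ideal.span (Set.range X) ^ b := by
  induction b generalizing f with
  | zero => simp
  | succ b ih =>
    have hf0 : constantCoeff f = 0 :=
      one_le_order_iff_constCoeff_eq_zero.mp (le_trans (by exact_mod_cast Nat.succ_pos b) hf)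
    rw [← sum_X_mul_pderiv_eulerInv hf0, pow_succ']
    refine Ideal.sum_mem _ fun i _ => Ideal.mul_mem_mul (Ideal.subset_span ⟨i, rfl⟩) (ih ?_)
    exact le_order_pderiv i (hf.trans (order_le_order_eulerInv f))

theorem mem_span_X_pow_iff_le_order [CharZero k] [Fintype σ] {b : ℕ} {f : MvPowerSeries σ k} :
    f ∈ Ideal.span (Set.range X) ^ b ↔ (b : ℕ∞) ≤ f.order :=
  ⟨le_order_of_mem_span_X_pow, mem_span_X_pow_of_le_order⟩

end Field

end MvPowerSeries

theorem psDeriv_eq_pderiv {k : Type*} [Field k] {n : ℕ} (i : Fin n)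
    (f : MvPowerSeries (Fin n) k) : psDeriv i f = pderiv k i f := by
  ext d
  rw [coeff_pderiv, mul_comm, ← Nat.cast_succ, ← nsmul_eq_mul]
  rfl

/-- order ≥ b for a power series iff all iterated formal partial
derivatives of order ≤ b−1 have vanishing constant coefficient. -/
theorem powerSeries_order_ge_iff_derivs_constantCoeff_eq_zero
    {k : Type*} [Field k] [CharZero k] (n b : ℕ) (hb : 1 ≤ b)
    (f : MvPowerSeries (Fin n) k) :
    f ∈ (Ideal.span (Set.range fun i : Fin n => (X i : MvPowerSeries (Fin n) k))) ^ b ↔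
      ∀ l : List (Fin n), l.length ≤ b - 1 →
        constantCoeff (l.foldl (fun g i => psDeriv i g) f) = 0 := by
  have hderiv : (fun g i => psDeriv i g) = fun (g : MvPowerSeries (Fin n) k) i => pderiv k i g := by
    funext g i
    exact psDeriv_eq_pderiv i g
  simp only [hderiv, mem_span_X_pow_iff_le_order, ← coeff_zero_eq_constantCoeff_apply]
  constructor
  · intro hf l hl
    obtain ⟨c, -, hc⟩ := coeff_foldl_pderiv l f 0
    rw [hc, zero_add, coeff_of_lt_order, mul_zero]
    rw [Multiset.degree_toFinsupp, Multiset.coe_card]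
    exact lt_of_lt_of_le (by exact_mod_cast (by omega : l.length < b)) hf
  · intro h
    refine nat_le_order fun d hd => ?_
    obtain ⟨c, hc, hcoeff⟩ := coeff_foldl_pderiv (toMultiset d).toList f 0
    have hlen : (toMultiset d).toList.length ≤ b - 1 := by
      rw [Multiset.length_toList, ← Multiset.degree_toFinsupp, toMultiset_toFinsupp]
      omega
    have hzero := h _ hlen
    rw [hcoeff, zero_add, Multiset.coe_toList, toMultiset_toFinsupp] at hzero
    exact (mul_eq_zero.mp hzero).resolve_left (Nat.cast_ne_zero.mpr hc)
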